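/- arXiv:1703.01787 — 3 statements merged into one kernel-verified Lean document; each statement's English description precedes it below -/
import Mathlib

section
/- (Welch bound) For any collection Φ = {φ_j}_{j=1}^n of unit vectors in F^m with n ≥ m, the coherence μ(Φ) = max_{j≠l} |⟨φ_j, φ_l⟩| satisfies μ(Φ) ≥ √((n−m)/(m(n−1))). -/
/-!
Write the vectors as the columns of their coordinate matrix `A` in an orthonormal basis. The Gram
matrix `Aᴴ A` and the frame operator `A Aᴴ` have the same trace `n` and the same Frobenius norm,
so Cauchy–Schwarz on the `m` diagonal entries of `A Aᴴ` gives `n² / m ≤ ∑ j, ∑ l, |⟪φ j, φ l⟫|²`.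
The diagonal terms contribute `n`, so the `n (n - 1)` off-diagonal terms sum to at least
`n (n - m) / m`, and one of them is at least their average `(n - m) / (m (n - 1))`.
-/

open scoped InnerProductSpace

/-- The coherence of a family of vectors: the supremum of absolute pairwise inner products. -/
noncomputable def coherence (𝕜 : Type*) {E : Type*} [RCLike 𝕜] [NormedAddCommGroup E]
    [InnerProductSpace 𝕜 E] {n : ℕ} (φ : Fin n → E) : ℝ :=
  sSup {r : ℝ | ∃ j l : Fin n, j ≠ l ∧ r = ‖(⟪φ j, φ l⟫_𝕜 : 𝕜)‖}

namespace Matrix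

variable {𝕜 ι κ : Type*} [RCLike 𝕜] [Fintype ι] [Fintype κ]

theorem trace_mul_conjTranspose_self_eq_sum_norm_sq (A : Matrix ι κ 𝕜) :
    (A * Aᴴ).trace = ((∑ i, ∑ j, ‖A i j‖ ^ 2 : ℝ) : 𝕜) := by
  simp [trace, mul_apply, RCLike.mul_conj]

theorem norm_trace_sq_le_card_mul_sum_norm_sq (M : Matrix ι ι 𝕜) :
    ‖M.trace‖ ^ 2 ≤ Fintype.card ι * ∑ i, ∑ j, ‖M i j‖ ^ 2 :=
  calc ‖M.trace‖ ^ 2 ≤ (∑ i, ‖M i i‖) ^ 2 := by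
        gcongr
        exact norm_sum_le _ _
    _ ≤ Fintype.card ι * ∑ i, ‖M i i‖ ^ 2 := sq_sum_le_card_mul_sum_sq
    _ ≤ Fintype.card ι * ∑ i, ∑ j, ‖M i j‖ ^ 2 := by
        gcongr with i
        exact Finset.single_le_sum (f := fun j => ‖M i j‖ ^ 2) (fun _ _ => by positivity)
          (Finset.mem_univ i)

end Matrix

section

open Matrix Module Finset

variable {𝕜 E : Type*} [RCLike 𝕜] [NormedAddCommGroup E] [InnerProductSpace 𝕜 E]

theorem OrthonormalBasis.gram_eq_conjTranspose_mul_toMatrix {ι κ : Type*} [Fintype ι]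
    (b : OrthonormalBasis ι 𝕜 E) (v : κ → E) :
    gram 𝕜 v = (b.toBasis.toMatrix v)ᴴ * b.toBasis.toMatrix v := by
  ext j l
  rw [gram_apply, ← b.sum_inner_mul_inner]
  simp [mul_apply, Basis.toMatrix_apply, b.repr_apply_apply]

theorem sq_sum_norm_sq_le_finrank_mul_sum_norm_inner_sq {κ : Type*} [Fintype κ]
    [FiniteDimensional 𝕜 E] (v : κ → E) :
    (∑ j, ‖v j‖ ^ 2) ^ 2 ≤ finrank 𝕜 E * ∑ j, ∑ l, ‖⟪v j, v l⟫_𝕜‖ ^ 2 := by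
  set A := (stdOrthonormalBasis 𝕜 E).toBasis.toMatrix v
  have hgram : gram 𝕜 v = Aᴴ * A := OrthonormalBasis.gram_eq_conjTranspose_mul_toMatrix _ v
  have htrace : (A * Aᴴ).trace = ((∑ j, ‖v j‖ ^ 2 : ℝ) : 𝕜) := by
    rw [trace_mul_comm, ← hgram]
    simp [trace, inner_self_eq_norm_sq_to_K]
  have hgram_frame : ∑ j, ∑ l, ‖⟪v j, v l⟫_𝕜‖ ^ 2 = ∑ a, ∑ b, ‖(A * Aᴴ) a b‖ ^ 2 := by
    apply RCLike.ofReal_injective (K := 𝕜)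
    rw [← trace_mul_conjTranspose_self_eq_sum_norm_sq]
    refine (trace_mul_conjTranspose_self_eq_sum_norm_sq (gram 𝕜 v)).symm.trans ?_
    simp only [hgram, conjTranspose_mul, conjTranspose_conjTranspose, Matrix.mul_assoc]
    rw [trace_mul_comm]
    simp only [Matrix.mul_assoc]
  calc (∑ j, ‖v j‖ ^ 2) ^ 2 = ‖(A * Aᴴ).trace‖ ^ 2 := by
        rw [htrace, RCLike.norm_ofReal, abs_of_nonneg (by positivity)]
    _ ≤ finrank 𝕜 E * ∑ a, ∑ b, ‖(A * Aᴴ) a b‖ ^ 2 := by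
        simpa using norm_trace_sq_le_card_mul_sum_norm_sq (A * Aᴴ)
    _ = finrank 𝕜 E * ∑ j, ∑ l, ‖⟪v j, v l⟫_𝕜‖ ^ 2 := by rw [hgram_frame]

theorem exists_ne_le_norm_inner_sq_of_norm_eq_one {κ : Type*} [Fintype κ]
    [FiniteDimensional 𝕜 E] (φ : κ → E) (hunit : ∀ j, ‖φ j‖ = 1) (hκ : 1 < Fintype.card κ) :
    ∃ j l, j ≠ l ∧ ((Fintype.card κ : ℝ) - finrank 𝕜 E) / (finrank 𝕜 E * (Fintype.card κ - 1))
      ≤ ‖⟪φ j, φ l⟫_𝕜‖ ^ 2 := by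
  classical
  set n : ℝ := (Fintype.card κ : ℝ)
  set d : ℝ := (finrank 𝕜 E : ℝ)
  set f : κ × κ → ℝ := fun p => ‖⟪φ p.1, φ p.2⟫_𝕜‖ ^ 2
  set D : Finset (κ × κ) := univ.offDiag
  have hsplit : ∑ j, ∑ l, ‖⟪φ j, φ l⟫_𝕜‖ ^ 2 = n + ∑ p ∈ D, f p := by
    rw [← Fintype.sum_prod_type' (fun j l => ‖⟪φ j, φ l⟫_𝕜‖ ^ 2), ← univ_product_univ,
      ← diag_union_offDiag, sum_union (disjoint_diag_offDiag _), sum_diag]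
    simp [f, n, D, inner_self_eq_norm_sq_to_K, hunit]
  have hpotential : n ^ 2 ≤ d * (n + ∑ p ∈ D, f p) := by
    simpa [hunit, hsplit] using sq_sum_norm_sq_le_finrank_mul_sum_norm_inner_sq (𝕜 := 𝕜) φ
  have hn : 1 < n := Nat.one_lt_cast.2 hκ
  have hd : 0 < d := pos_of_mul_pos_left (hpotential.trans_lt' (by positivity)) (by positivity)
  have hcard : (#D : ℝ) = n * (n - 1) := by
    rw [offDiag_card, card_univ, Nat.cast_sub (Nat.le_mul_self _)]
    push_cast [n]
    ring
  have hsum : ∑ _p ∈ D, (n - d) / (d * (n - 1)) ≤ ∑ p ∈ D, f p := by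
    rw [sum_const, nsmul_eq_mul, hcard]
    calc n * (n - 1) * ((n - d) / (d * (n - 1))) = n ^ 2 / d - n := by
          field_simp [(sub_pos.2 hn).ne']
      _ ≤ ∑ p ∈ D, f p := by
          rw [sub_le_iff_le_add, div_le_iff₀ hd]
          linarith
  obtain ⟨j, l, hjl⟩ := Fintype.exists_pair_of_one_lt_card hκ
  obtain ⟨p, hp, hle⟩ := exists_le_of_sum_le ⟨(j, l), by simp [D, hjl]⟩ hsum
  exact ⟨p.1, p.2, (mem_offDiag.1 hp).2.2, hle⟩

theorem norm_inner_le_coherence {n : ℕ} (φ : Fin n → E) {j l : Fin n} (hjl : j ≠ l) :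
    ‖⟪φ j, φ l⟫_𝕜‖ ≤ coherence 𝕜 φ := by
  refine le_csSup (Set.Finite.bddAbove ?_) ⟨j, l, hjl, rfl⟩
  refine (Set.finite_range fun p : Fin n × Fin n => ‖⟪φ p.1, φ p.2⟫_𝕜‖).subset ?_
  rintro r ⟨j, l, -, rfl⟩
  exact ⟨(j, l), rfl⟩

end

theorem welch_bound_general (𝕜 : Type*) [RCLike 𝕜] (m n : ℕ) (hn : 1 < n)
    (φ : Fin n → EuclideanSpace 𝕜 (Fin m)) (hunit : ∀ j, ‖φ j‖ = 1) :
    coherence 𝕜 φ ≥ Real.sqrt (((n : ℝ) - m) / (m * ((n : ℝ) - 1))) := by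
  obtain ⟨j, l, hjl, hle⟩ :=
    exists_ne_le_norm_inner_sq_of_norm_eq_one (𝕜 := 𝕜) φ hunit (by simpa using hn)
  rw [Fintype.card_fin, finrank_euclideanSpace_fin] at hle
  calc Real.sqrt (((n : ℝ) - m) / (m * ((n : ℝ) - 1)))
      ≤ Real.sqrt (‖⟪φ j, φ l⟫_𝕜‖ ^ 2) := Real.sqrt_le_sqrt hle
    _ = ‖⟪φ j, φ l⟫_𝕜‖ := Real.sqrt_sq (norm_nonneg _)
    _ ≤ coherence 𝕜 φ := norm_inner_le_coherence φ hjl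

/-- Welch bound: any `n` unit vectors in `𝕜^m` with `m ≤ n`, `1 < n` have coherence at least
`√((n-m)/(m(n-1)))`. -/
theorem welch_bound (𝕜 : Type*) [RCLike 𝕜] (m n : ℕ) (hm : 0 < m) (hmn : m ≤ n) (hn : 1 < n)
    (φ : Fin n → EuclideanSpace 𝕜 (Fin m)) (hunit : ∀ j, ‖φ j‖ = 1) :
    coherence 𝕜 φ ≥ Real.sqrt (((n : ℝ) - m) / (m * ((n : ℝ) - 1))) :=
  welch_bound_general 𝕜 m n hn φ hunit
end

section
/- If Φ = {φ_j}_{j=1}^n is a collection of unit vectors in F^m whose coherence equals the Welch constant √((n−m)/(m(n−1))) with n > m, then Φ is equiangular, i.e., |⟨φ_j, φ_l⟩| is the same for all j ≠ l, and Φ is a tight frame. -/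
open scoped InnerProductSpace

open scoped Matrix
open Finset

private lemma split_sum {N : ℕ} (f : Fin N → Fin N → ℝ) :
    ∑ i, ∑ j, f i j = (∑ i, f i i) + ∑ i, ∑ j ∈ Finset.univ.erase i, f i j := by
  rw [← Finset.sum_add_distrib]
  refine Finset.sum_congr rfl fun i _ => ?_
  exact (Finset.add_sum_erase _ _ (Finset.mem_univ i)).symm

/-- If the coherence of `n > m` unit vectors in `𝕜^m` attains the Welch bound, the family is
equiangular and a tight frame. -/
theorem welch_equality_equiangular_tight (𝕜 : Type*) [RCLike 𝕜] (m n : ℕ)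
    (hm : 0 < m) (hmn : m < n)
    (φ : Fin n → EuclideanSpace 𝕜 (Fin m)) (hunit : ∀ j, ‖φ j‖ = 1)
    (hwelch : coherence 𝕜 φ = Real.sqrt (((n : ℝ) - m) / (m * ((n : ℝ) - 1)))) :
    (∃ c : ℝ, ∀ j l : Fin n, j ≠ l → ‖(⟪φ j, φ l⟫_𝕜 : 𝕜)‖ = c) ∧
    (∃ a : ℝ, ∀ x : EuclideanSpace 𝕜 (Fin m),
      ∑ j, ‖(⟪φ j, x⟫_𝕜 : 𝕜)‖ ^ 2 = a * ‖x‖ ^ 2) := by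
  classical
  have hm' : (0:ℝ) < m := by exact_mod_cast hm
  have hmn' : (m:ℝ) < n := by exact_mod_cast hmn
  have hn1 : (1:ℝ) < n := by
    have : 1 < n := lt_of_le_of_lt hm hmn
    exact_mod_cast this
  set W : ℝ := Real.sqrt (((n : ℝ) - m) / (m * ((n : ℝ) - 1))) with hWdef
  have hWnn : 0 ≤ W := Real.sqrt_nonneg _
  have hWsq : W^2 = ((n : ℝ) - m) / (m * ((n : ℝ) - 1)) := by
    rw [hWdef]
    exact Real.sq_sqrt (div_nonneg (by linarith) (by nlinarith))
  -- coherence bounds each pairwise inner product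
  have hbdd : BddAbove {r : ℝ | ∃ j l : Fin n, j ≠ l ∧ r = ‖(⟪φ j, φ l⟫_𝕜 : 𝕜)‖} := by
    apply Set.Finite.bddAbove
    apply Set.Finite.subset
      (Set.finite_range (fun p : Fin n × Fin n => ‖(⟪φ p.1, φ p.2⟫_𝕜 : 𝕜)‖))
    rintro r ⟨j, l, -, rfl⟩
    exact ⟨(j, l), rfl⟩
  have hle : ∀ j l : Fin n, j ≠ l → ‖(⟪φ j, φ l⟫_𝕜 : 𝕜)‖ ≤ W := by
    intro j l hjl
    rw [← hwelch]
    exact le_csSup hbdd ⟨j, l, hjl, rfl⟩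
  have hle2 : ∀ j l : Fin n, j ≠ l → ‖(⟪φ j, φ l⟫_𝕜 : 𝕜)‖^2 ≤ W^2 :=
    fun j l hjl => pow_le_pow_left₀ (norm_nonneg _) (hle j l hjl) 2
  -- the matrix setup
  set M : Matrix (Fin n) (Fin m) 𝕜 := Matrix.of (fun j a => φ j a) with hM
  set T : Matrix (Fin m) (Fin m) 𝕜 := Mᴴ * M with hT
  have htr : ((M * Mᴴ) * (M * Mᴴ)).trace = (T * T).trace := by
    rw [Matrix.mul_assoc M Mᴴ (M * Mᴴ), ← Matrix.mul_assoc Mᴴ M Mᴴ,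
      Matrix.trace_mul_comm, Matrix.mul_assoc, hT]
  set S : ℝ := ∑ j, ∑ l, ‖(⟪φ j, φ l⟫_𝕜 : 𝕜)‖^2 with hS
  set Q : ℝ := ∑ a, ∑ b, ‖T a b‖^2 with hQ
  have hGapp : ∀ j l : Fin n, (M * Mᴴ) j l = ⟪φ l, φ j⟫_𝕜 := by
    intro j l
    simp [hM, Matrix.mul_apply, Matrix.conjTranspose_apply, PiLp.inner_apply,
      RCLike.inner_apply, mul_comm]
  have hGtrace : ((M * Mᴴ) * (M * Mᴴ)).trace = ((S : ℝ) : 𝕜) := by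
    have h1 : ((M * Mᴴ) * (M * Mᴴ)).trace = ∑ j, ∑ l, (M * Mᴴ) j l * (M * Mᴴ) l j := by
      simp [Matrix.trace, Matrix.mul_apply, Matrix.diag]
    rw [h1, hS]
    push_cast
    refine Finset.sum_congr rfl fun j _ => Finset.sum_congr rfl fun l _ => ?_
    rw [hGapp, hGapp, ← inner_conj_symm (φ l) (φ j), RCLike.conj_mul]
  have hTherm : ∀ a b, T b a = (starRingEnd 𝕜) (T a b) := by
    intro a b
    simp [hT, hM, Matrix.mul_apply, Matrix.conjTranspose_apply, map_sum, mul_comm]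
  have hTtrace : (T * T).trace = ((Q : ℝ) : 𝕜) := by
    have h1 : (T * T).trace = ∑ a, ∑ b, T a b * T b a := by
      simp [Matrix.trace, Matrix.mul_apply, Matrix.diag]
    rw [h1, hQ]
    push_cast
    refine Finset.sum_congr rfl fun a _ => Finset.sum_congr rfl fun b _ => ?_
    rw [hTherm a b, RCLike.mul_conj]
  have hSQ : S = Q := by
    have : ((S : ℝ) : 𝕜) = ((Q : ℝ) : 𝕜) := by rw [← hGtrace, ← hTtrace, htr]
    exact_mod_cast this
  -- the diagonal of T
  set g : Fin m → ℝ := fun a => ∑ j, ‖φ j a‖^2 with hg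
  have hga_nonneg : ∀ a, 0 ≤ g a := fun a => Finset.sum_nonneg fun j _ => sq_nonneg _
  have hdiagT : ∀ a, T a a = ((g a : ℝ) : 𝕜) := by
    intro a
    simp only [hT, hM, Matrix.mul_apply, Matrix.conjTranspose_apply, Matrix.of_apply, hg]
    push_cast
    refine Finset.sum_congr rfl fun j _ => ?_
    rw [RCLike.star_def, RCLike.conj_mul]
  have hsum_g : ∑ a, g a = n := by
    simp only [hg]
    rw [Finset.sum_comm]
    have : ∀ j : Fin n, ∑ a, ‖φ j a‖^2 = 1 := by
      intro j
      rw [← PiLp.norm_sq_eq_of_L2, hunit, one_pow]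
    simp [this]
  -- upper bound : S ≤ n^2/m
  have hdiagS : ∑ j, ‖(⟪φ j, φ j⟫_𝕜 : 𝕜)‖^2 = (n:ℝ) := by
    have : ∀ j, ‖(⟪φ j, φ j⟫_𝕜 : 𝕜)‖^2 = 1 := by
      intro j
      rw [inner_self_eq_norm_sq_to_K, hunit]
      simp
    rw [Finset.sum_congr rfl fun j _ => this j]
    simp
  have hcardsum : ∑ j : Fin n, ∑ _l ∈ Finset.univ.erase j, W^2 = n * ((n:ℝ)-1) * W^2 := by
    have hcard : ∀ j : Fin n, (Finset.univ.erase j).card = n - 1 := by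
      intro j
      rw [Finset.card_erase_of_mem (Finset.mem_univ j), Finset.card_univ, Fintype.card_fin]
    have hcast : ((n - 1 : ℕ) : ℝ) = (n:ℝ) - 1 := by
      have : 1 ≤ n := by omega
      push_cast [this]
      ring
    simp [Finset.sum_const, hcard, hcast]
    ring
  have hsplitS := split_sum (fun j l => ‖(⟪φ j, φ l⟫_𝕜 : 𝕜)‖^2)
  have harith : (n:ℝ) + n * ((n:ℝ)-1) * W^2 = (n:ℝ)^2 / m := by
    rw [hWsq]
    have h1 : ((n:ℝ) - 1) ≠ 0 := by linarith
    field_simp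
    ring
  have hoffS_le : ∑ j, ∑ l ∈ Finset.univ.erase j, ‖(⟪φ j, φ l⟫_𝕜 : 𝕜)‖^2
      ≤ n * ((n:ℝ)-1) * W^2 := by
    rw [← hcardsum]
    refine Finset.sum_le_sum fun j _ => Finset.sum_le_sum fun l hl => ?_
    exact hle2 j l (Ne.symm (Finset.mem_erase.mp hl).1)
  have hSub : S ≤ (n:ℝ)^2 / m := by
    rw [hS, hsplitS, hdiagS, ← harith]
    linarith [hoffS_le]
  -- lower bound : n^2/m ≤ ∑ g^2 ≤ Q
  have hexp : ∑ a, (g a - (n:ℝ)/m)^2 = (∑ a, (g a)^2) - (n:ℝ)^2/m := by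
    have h1 : ∑ a, (g a - (n:ℝ)/m)^2
        = ∑ a, ((g a)^2 - 2*((n:ℝ)/m)*(g a) + ((n:ℝ)/m)^2) :=
      Finset.sum_congr rfl fun a _ => by ring
    rw [h1, Finset.sum_add_distrib, Finset.sum_sub_distrib, ← Finset.mul_sum, hsum_g,
      Finset.sum_const, Finset.card_univ, Fintype.card_fin, nsmul_eq_mul]
    field_simp
    ring
  have hg_lb : (n:ℝ)^2/m ≤ ∑ a, (g a)^2 := by
    have h0 : 0 ≤ ∑ a, (g a - (n:ℝ)/m)^2 := Finset.sum_nonneg fun a _ => sq_nonneg _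
    linarith [hexp]
  have hQdiag : ∀ a, ‖T a a‖^2 = (g a)^2 := by
    intro a
    rw [hdiagT a, RCLike.norm_ofReal, sq_abs]
  have hsplitQ := split_sum (fun a b => ‖T a b‖^2)
  have hoffQ_nonneg : 0 ≤ ∑ a, ∑ b ∈ Finset.univ.erase a, ‖T a b‖^2 :=
    Finset.sum_nonneg fun a _ => Finset.sum_nonneg fun b _ => sq_nonneg _
  have hQeq : Q = (∑ a, (g a)^2) + ∑ a, ∑ b ∈ Finset.univ.erase a, ‖T a b‖^2 := by
    rw [hQ, hsplitQ]
    congr 1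
    exact Finset.sum_congr rfl fun a _ => hQdiag a
  -- squeeze
  have hQSval : Q ≤ (n:ℝ)^2/m := hSQ ▸ hSub
  have hgsq_eq : ∑ a, (g a)^2 = (n:ℝ)^2/m := by
    have := hQeq ▸ hQSval
    linarith [hg_lb, hoffQ_nonneg, hQeq, hQSval]
  have hoffQ0 : ∑ a, ∑ b ∈ Finset.univ.erase a, ‖T a b‖^2 = 0 := by
    linarith [hQeq, hQSval, hgsq_eq, hg_lb, hoffQ_nonneg]
  have hSeq : S = (n:ℝ)^2/m := by
    have : (n:ℝ)^2/m ≤ Q := by rw [hQeq]; linarith [hg_lb, hoffQ_nonneg]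
    rw [hSQ]
    linarith [hQSval]
  -- equiangularity
  have hoffS_eq : ∑ j, ∑ l ∈ Finset.univ.erase j, ‖(⟪φ j, φ l⟫_𝕜 : 𝕜)‖^2
      = n * ((n:ℝ)-1) * W^2 := by
    have := hSeq
    rw [hS, hsplitS, hdiagS] at this
    linarith [harith]
  have hzero : ∑ j, ∑ l ∈ Finset.univ.erase j, (W^2 - ‖(⟪φ j, φ l⟫_𝕜 : 𝕜)‖^2) = 0 := by
    have hd : ∑ j, ∑ l ∈ Finset.univ.erase j, (W^2 - ‖(⟪φ j, φ l⟫_𝕜 : 𝕜)‖^2)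
        = (∑ j : Fin n, ∑ _l ∈ Finset.univ.erase j, W^2)
          - ∑ j, ∑ l ∈ Finset.univ.erase j, ‖(⟪φ j, φ l⟫_𝕜 : 𝕜)‖^2 := by
      rw [← Finset.sum_sub_distrib]
      exact Finset.sum_congr rfl fun j _ => by rw [Finset.sum_sub_distrib]
    rw [hd, hcardsum, hoffS_eq]
    ring
  have hang : ∀ j l : Fin n, j ≠ l → ‖(⟪φ j, φ l⟫_𝕜 : 𝕜)‖ = W := by
    intro j l hjl
    have h1 := (Finset.sum_eq_zero_iff_of_nonneg (fun j _ => Finset.sum_nonneg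
      (fun l hl => sub_nonneg.mpr (hle2 j l (Ne.symm (Finset.mem_erase.mp hl).1))))).mp hzero
      j (Finset.mem_univ j)
    have h2 := (Finset.sum_eq_zero_iff_of_nonneg
      (fun l hl => sub_nonneg.mpr (hle2 j l (Ne.symm (Finset.mem_erase.mp hl).1)))).mp h1
      l (Finset.mem_erase.mpr ⟨Ne.symm hjl, Finset.mem_univ l⟩)
    have h3 : ‖(⟪φ j, φ l⟫_𝕜 : 𝕜)‖^2 = W^2 := by linarith
    calc ‖(⟪φ j, φ l⟫_𝕜 : 𝕜)‖ = Real.sqrt (‖(⟪φ j, φ l⟫_𝕜 : 𝕜)‖^2) :=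
          (Real.sqrt_sq (norm_nonneg _)).symm
      _ = Real.sqrt (W^2) := by rw [h3]
      _ = W := Real.sqrt_sq hWnn
  -- T is (n/m) • I
  have hgall : ∀ a, g a = (n:ℝ)/m := by
    intro a
    have h0 : ∑ a, (g a - (n:ℝ)/m)^2 = 0 := by rw [hexp, hgsq_eq]; ring
    have := (Finset.sum_eq_zero_iff_of_nonneg (fun a _ => sq_nonneg _)).mp h0 a
      (Finset.mem_univ a)
    have := sq_eq_zero_iff.mp this
    linarith
  have hToff : ∀ a b : Fin m, b ≠ a → T a b = 0 := by
    intro a b hba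
    have h1 := (Finset.sum_eq_zero_iff_of_nonneg (fun a _ => Finset.sum_nonneg
      (fun b _ => sq_nonneg _))).mp hoffQ0 a (Finset.mem_univ a)
    have h2 := (Finset.sum_eq_zero_iff_of_nonneg (fun b _ => sq_nonneg _)).mp h1 b
      (Finset.mem_erase.mpr ⟨hba, Finset.mem_univ b⟩)
    have := sq_eq_zero_iff.mp h2
    exact norm_eq_zero.mp this
  refine ⟨⟨W, hang⟩, ⟨(n:ℝ)/m, fun x => ?_⟩⟩
  -- tight frame identity
  have key : ((∑ j, ‖(⟪φ j, x⟫_𝕜 : 𝕜)‖^2 : ℝ) : 𝕜) = (((n:ℝ)/m * ‖x‖^2 : ℝ) : 𝕜) := by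
    have e1 : ((∑ j, ‖(⟪φ j, x⟫_𝕜 : 𝕜)‖^2 : ℝ) : 𝕜)
        = ∑ j, (starRingEnd 𝕜) (⟪φ j, x⟫_𝕜) * (⟪φ j, x⟫_𝕜 : 𝕜) := by
      push_cast
      exact Finset.sum_congr rfl fun j _ => (RCLike.conj_mul _).symm
    have e2 : (∑ j, (starRingEnd 𝕜) (⟪φ j, x⟫_𝕜) * (⟪φ j, x⟫_𝕜 : 𝕜))
        = ∑ a, ∑ b, T a b * ((starRingEnd 𝕜) (x b) * x a) := by
      simp only [PiLp.inner_apply, RCLike.inner_apply, map_sum, map_mul, RCLike.conj_conj,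
        hT, hM, Matrix.mul_apply, Matrix.conjTranspose_apply, Matrix.of_apply,
        Finset.sum_mul, Finset.mul_sum]
      rw [Finset.sum_comm]
      refine Finset.sum_congr rfl fun a _ => ?_
      rw [Finset.sum_comm]
      refine Finset.sum_congr rfl fun b _ => Finset.sum_congr rfl fun j _ => ?_
      rw [RCLike.star_def]
      ring
    have e3 : (∑ a, ∑ b, T a b * ((starRingEnd 𝕜) (x b) * x a))
        = ∑ a, ((((n:ℝ)/m : ℝ) : 𝕜) * ((‖x a‖^2 : ℝ) : 𝕜)) := by
      refine Finset.sum_congr rfl fun a _ => ?_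
      rw [Finset.sum_eq_single a]
      · rw [hdiagT a, hgall a, RCLike.conj_mul]
        push_cast
        ring
      · intro b _ hb
        rw [hToff a b hb]
        ring
      · intro h
        exact absurd (Finset.mem_univ a) h
    rw [e1, e2, e3]
    have e4 : ‖x‖^2 = ∑ a, ‖x a‖^2 := PiLp.norm_sq_eq_of_L2 _ x
    rw [← Finset.mul_sum, e4]
    push_cast
    ring
  exact_mod_cast key
end

section
/- (Naimark complement preserves frame structure) If Φ = {φ_j}_{j=1}^n is a unit-norm tight frame for F^m with m < n, then there exists a unit-norm tight frame Ψ = {ψ_j}_{j=1}^n for F^{n−m} such that for all j ≠ l, |⟨ψ_j, ψ_l⟩| = (m/(n−m))·|⟨φ_j, φ_l⟩|; consequently μ(Ψ) = (m/(n−m))·μ(Φ). -/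
open scoped InnerProductSpace

/-!
Scaling `φ` by `A^{-1/2}` turns a tight frame with bound `A` into a Parseval frame `u`, whose
analysis operator `T x = (⟪u j, x⟫)_j` is an isometry `E → 𝕜^ι`. Projecting the standard basis
`δ_j` of `𝕜^ι` onto `(range T)ᗮ`, a space of dimension `card ι - dim E`, gives a Parseval frame of
that space with Gram matrix `I - (⟪u j, u l⟫)`, since the projection of `δ_j` is `δ_j - T u_j`.
For a unit-norm frame the vectors of the complement have squared norm `1 - A⁻¹`; rescaling by
`√(A / (A - 1))` makes them unit vectors and scales the off-diagonal Gram entries of `φ` by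
`-1 / (A - 1)`, which is `-m / (n - m)` for `A = n / m`.
-/

section TightFrame

open Module ComplexConjugate

universe u₁ u₂ u₃ u₄

variable {𝕜 : Type u₁} {E : Type u₂} {E' : Type u₃} {ι : Type u₄} [RCLike 𝕜]
  [NormedAddCommGroup E] [InnerProductSpace 𝕜 E] [NormedAddCommGroup E'] [InnerProductSpace 𝕜 E']
  [Fintype ι]

variable (𝕜) in
def IsTightFrame (φ : ι → E) (A : ℝ) : Prop :=
  ∀ x, ∑ j, ‖⟪φ j, x⟫_𝕜‖ ^ 2 = A * ‖x‖ ^ 2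

theorem IsTightFrame.const_smul {φ : ι → E} {A : ℝ} (hφ : IsTightFrame 𝕜 φ A) (c : 𝕜) :
    IsTightFrame 𝕜 (fun j => c • φ j) (‖c‖ ^ 2 * A) := by
  intro x
  simp only [inner_smul_left, norm_mul, RCLike.norm_conj, mul_pow, ← Finset.mul_sum, hφ x,
    mul_assoc]

theorem IsTightFrame.map {φ : ι → E} {A : ℝ} (hφ : IsTightFrame 𝕜 φ A) (L : E ≃ₗᵢ[𝕜] E') :
    IsTightFrame 𝕜 (fun j => L (φ j)) A := by
  intro x
  simp only [L.inner_map_eq_flip, hφ (L.symm x), LinearIsometryEquiv.norm_map]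

variable (𝕜) in
noncomputable def analysisMap (u : ι → E) : E →ₗ[𝕜] EuclideanSpace 𝕜 ι where
  toFun x := WithLp.toLp 2 fun j => ⟪u j, x⟫_𝕜
  map_add' x y := by ext j; simp [inner_add_right]
  map_smul' c x := by ext j; simp [inner_smul_right]

theorem IsTightFrame.norm_analysisMap {u : ι → E} (hu : IsTightFrame 𝕜 u 1) (x : E) :
    ‖analysisMap 𝕜 u x‖ = ‖x‖ := by
  rw [← sq_eq_sq₀ (norm_nonneg _) (norm_nonneg _), EuclideanSpace.norm_sq_eq, ← one_mul (‖x‖ ^ 2),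
    ← hu x]
  rfl

variable (𝕜) in
noncomputable def naimarkSubspace (u : ι → E) : Submodule 𝕜 (EuclideanSpace 𝕜 ι) :=
  (LinearMap.range (analysisMap 𝕜 u))ᗮ

theorem IsTightFrame.finrank_add_finrank_naimarkSubspace [FiniteDimensional 𝕜 E] {u : ι → E}
    (hu : IsTightFrame 𝕜 u 1) :
    finrank 𝕜 E + finrank 𝕜 (naimarkSubspace 𝕜 u) = Fintype.card ι := by
  have hinj : Function.Injective (analysisMap 𝕜 u) :=
    (LinearIsometry.mk (analysisMap 𝕜 u) hu.norm_analysisMap).injective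
  rw [← LinearMap.finrank_range_of_inj hinj, naimarkSubspace,
    Submodule.finrank_add_finrank_orthogonal, finrank_euclideanSpace]

variable [DecidableEq ι]

theorem isTightFrame_orthogonalProjectionOnto_single (K : Submodule 𝕜 (EuclideanSpace 𝕜 ι))
    [K.HasOrthogonalProjection] :
    IsTightFrame 𝕜 (fun j => K.orthogonalProjectionOnto (EuclideanSpace.single j 1)) 1 := by
  intro y
  simp only [Submodule.inner_orthogonalProjectionOnto_eq_of_mem_right,
    EuclideanSpace.inner_single_left, map_one, one_mul, Submodule.coe_norm,
    EuclideanSpace.norm_sq_eq]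

theorem inner_analysisMap_single (u : ι → E) (x : E) (j : ι) :
    ⟪analysisMap 𝕜 u x, EuclideanSpace.single j 1⟫_𝕜 = ⟪x, u j⟫_𝕜 := by
  simp [analysisMap, EuclideanSpace.inner_single_right]

variable (𝕜) in
noncomputable def naimarkComplement (u : ι → E) (j : ι) : naimarkSubspace 𝕜 u :=
  (naimarkSubspace 𝕜 u).orthogonalProjectionOnto (EuclideanSpace.single j 1)

theorem IsTightFrame.coe_naimarkComplement {u : ι → E} (hu : IsTightFrame 𝕜 u 1) (j : ι) :
    (naimarkComplement 𝕜 u j : EuclideanSpace 𝕜 ι) =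
      EuclideanSpace.single j 1 - analysisMap 𝕜 u (u j) := by
  refine Submodule.eq_starProjection_of_mem_orthogonal' ?_
    (Submodule.le_orthogonal_orthogonal _ (LinearMap.mem_range_self _ _)) (sub_add_cancel _ _).symm
  rintro _ ⟨x, rfl⟩
  rw [inner_sub_right, inner_analysisMap_single,
    (LinearMap.norm_map_iff_inner_map_map _).1 hu.norm_analysisMap, sub_self]

theorem IsTightFrame.inner_naimarkComplement {u : ι → E} (hu : IsTightFrame 𝕜 u 1) (j l : ι) :
    ⟪naimarkComplement 𝕜 u j, naimarkComplement 𝕜 u l⟫_𝕜 =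
      (if j = l then 1 else 0) - ⟪u j, u l⟫_𝕜 := by
  rw [naimarkComplement, Submodule.inner_orthogonalProjectionOnto_eq_of_mem_right,
    hu.coe_naimarkComplement, inner_sub_right]
  simp [EuclideanSpace.inner_single_left, analysisMap]

theorem IsTightFrame.exists_naimarkComplement [FiniteDimensional 𝕜 E] {φ : ι → E} {A : ℝ}
    (hφ : IsTightFrame 𝕜 φ A) (hA : 0 < A) {d : ℕ} (hd : finrank 𝕜 E + d = Fintype.card ι) :
    ∃ ψ : ι → EuclideanSpace 𝕜 (Fin d), IsTightFrame 𝕜 ψ 1 ∧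
      ∀ j l, ⟪ψ j, ψ l⟫_𝕜 = (if j = l then 1 else 0) - ((A⁻¹ : ℝ) : 𝕜) * ⟪φ j, φ l⟫_𝕜 := by
  set c : 𝕜 := (((√A)⁻¹ : ℝ) : 𝕜)
  have hcc : conj c * c = ((A⁻¹ : ℝ) : 𝕜) := by
    rw [RCLike.conj_ofReal, ← RCLike.ofReal_mul, ← mul_inv, Real.mul_self_sqrt hA.le]
  have hu : IsTightFrame 𝕜 (fun j => c • φ j) 1 := by
    have h1 : ‖c‖ ^ 2 * A = 1 := by
      rw [RCLike.norm_ofReal, sq_abs, inv_pow, Real.sq_sqrt hA.le, inv_mul_cancel₀ hA.ne']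
    simpa only [h1] using hφ.const_smul c
  have hK : finrank 𝕜 (naimarkSubspace 𝕜 fun j => c • φ j) = d := by
    have := hu.finrank_add_finrank_naimarkSubspace
    omega
  obtain ⟨b⟩ : Nonempty (OrthonormalBasis (Fin d) 𝕜 (naimarkSubspace 𝕜 fun j => c • φ j)) :=
    ⟨(stdOrthonormalBasis 𝕜 _).reindex (finCongr hK)⟩
  refine ⟨fun j => b.repr (naimarkComplement 𝕜 _ j),
    (isTightFrame_orthogonalProjectionOnto_single _).map b.repr, fun j l => ?_⟩
  rw [b.repr.inner_map_map, hu.inner_naimarkComplement, inner_smul_left, inner_smul_right,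
    ← mul_assoc, hcc]

theorem IsTightFrame.exists_unitNorm_naimarkComplement [FiniteDimensional 𝕜 E] {φ : ι → E}
    {A : ℝ} (hφ : IsTightFrame 𝕜 φ A) (hA : 1 < A) (hunit : ∀ j, ‖φ j‖ = 1) {d : ℕ}
    (hd : finrank 𝕜 E + d = Fintype.card ι) :
    ∃ ψ : ι → EuclideanSpace 𝕜 (Fin d), (∀ j, ‖ψ j‖ = 1) ∧ IsTightFrame 𝕜 ψ (A / (A - 1)) ∧
      ∀ j l, j ≠ l → ‖⟪ψ j, ψ l⟫_𝕜‖ = (A - 1)⁻¹ * ‖⟪φ j, φ l⟫_𝕜‖ := by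
  obtain ⟨ψ, hψ, hinner⟩ := hφ.exists_naimarkComplement (by linarith) hd
  have hA1 : 0 < A - 1 := sub_pos.2 hA
  have hν_unit : A / (A - 1) * (1 - A⁻¹) = 1 := by
    field_simp
  have hν_off : A / (A - 1) * A⁻¹ = (A - 1)⁻¹ := by
    field_simp
  set ν : ℝ := A / (A - 1)
  have hν : 0 ≤ ν := by positivity
  have hinner' : ∀ j l, ⟪(√ν : 𝕜) • ψ j, (√ν : 𝕜) • ψ l⟫_𝕜 =
      (ν : 𝕜) * ((if j = l then 1 else 0) - ((A⁻¹ : ℝ) : 𝕜) * ⟪φ j, φ l⟫_𝕜) := by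
    intro j l
    rw [inner_smul_left, inner_smul_right, RCLike.conj_ofReal, ← mul_assoc, ← RCLike.ofReal_mul,
      Real.mul_self_sqrt hν, hinner]
  refine ⟨fun j => (√ν : 𝕜) • ψ j, fun j => ?_, ?_, fun j l hjl => ?_⟩
  · rw [@norm_eq_sqrt_re_inner 𝕜, hinner', if_pos rfl, inner_self_eq_one_of_norm_eq_one (hunit j),
      mul_one, ← RCLike.ofReal_one, ← RCLike.ofReal_sub, ← RCLike.ofReal_mul, RCLike.ofReal_re,
      hν_unit, Real.sqrt_one]
  · have h := hψ.const_smul (√ν : 𝕜)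
    rwa [RCLike.norm_ofReal, abs_of_nonneg (Real.sqrt_nonneg _), Real.sq_sqrt hν, mul_one] at h
  · rw [hinner', if_neg hjl, zero_sub, mul_neg, norm_neg, ← mul_assoc, ← RCLike.ofReal_mul,
      norm_mul, RCLike.norm_ofReal, hν_off, abs_of_pos (inv_pos.2 hA1)]

open scoped Pointwise in
theorem coherence_eq_mul_of_norm_inner_eq {𝕜 E E' : Type*} [RCLike 𝕜] [NormedAddCommGroup E]
    [InnerProductSpace 𝕜 E] [NormedAddCommGroup E'] [InnerProductSpace 𝕜 E'] {n : ℕ}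
    {φ : Fin n → E} {ψ : Fin n → E'} {c : ℝ} (hc : 0 ≤ c)
    (h : ∀ j l, j ≠ l → ‖⟪ψ j, ψ l⟫_𝕜‖ = c * ‖⟪φ j, φ l⟫_𝕜‖) :
    coherence 𝕜 ψ = c * coherence 𝕜 φ := by
  have hset : {r : ℝ | ∃ j l : Fin n, j ≠ l ∧ r = ‖⟪ψ j, ψ l⟫_𝕜‖} =
      c • {r : ℝ | ∃ j l : Fin n, j ≠ l ∧ r = ‖⟪φ j, φ l⟫_𝕜‖} := by
    ext r
    simp only [Set.mem_smul_set, Set.mem_ofPred_eq, smul_eq_mul]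
    constructor
    · rintro ⟨j, l, hjl, rfl⟩
      exact ⟨_, ⟨j, l, hjl, rfl⟩, (h j l hjl).symm⟩
    · rintro ⟨_, ⟨j, l, hjl, rfl⟩, rfl⟩
      exact ⟨j, l, hjl, (h j l hjl).symm⟩
  rw [coherence, coherence, hset, Real.sSup_smul_of_nonneg hc, smul_eq_mul]

/-- Naimark complement: a unit-norm tight frame of `n` vectors in `𝕜^m` (`m < n`) yields a
unit-norm tight frame of `n` vectors in `𝕜^(n-m)` with all absolute pairwise inner products,
hence the coherence, scaled by `m/(n-m)`. -/
theorem naimark_complement_frame (𝕜 : Type*) [RCLike 𝕜] (m n : ℕ) (hm : 0 < m) (hmn : m < n)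
    (φ : Fin n → EuclideanSpace 𝕜 (Fin m)) (hunit : ∀ j, ‖φ j‖ = 1)
    (htight : ∀ x : EuclideanSpace 𝕜 (Fin m),
      ∑ j, ‖(⟪φ j, x⟫_𝕜 : 𝕜)‖ ^ 2 = ((n : ℝ) / m) * ‖x‖ ^ 2) :
    ∃ ψ : Fin n → EuclideanSpace 𝕜 (Fin (n - m)),
      (∀ j, ‖ψ j‖ = 1) ∧
      (∀ x : EuclideanSpace 𝕜 (Fin (n - m)),
        ∑ j, ‖(⟪ψ j, x⟫_𝕜 : 𝕜)‖ ^ 2 = ((n : ℝ) / (n - m : ℕ)) * ‖x‖ ^ 2) ∧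
      (∀ j l : Fin n, j ≠ l →
        ‖(⟪ψ j, ψ l⟫_𝕜 : 𝕜)‖ = ((m : ℝ) / ((n : ℝ) - m)) * ‖(⟪φ j, φ l⟫_𝕜 : 𝕜)‖) ∧
      coherence 𝕜 ψ = ((m : ℝ) / ((n : ℝ) - m)) * coherence 𝕜 φ := by
  have hm' : (0 : ℝ) < m := by exact_mod_cast hm
  have hnm : (0 : ℝ) < (n : ℝ) - m := sub_pos.2 (by exact_mod_cast hmn)
  have hA : 1 < (n : ℝ) / m := (one_lt_div hm').2 (by exact_mod_cast hmn)
  have hscale : ((n : ℝ) / m - 1)⁻¹ = m / (n - m) := by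
    field_simp
  have hbound : (n : ℝ) / m / ((n : ℝ) / m - 1) = n / (n - m : ℕ) := by
    rw [Nat.cast_sub hmn.le]
    field_simp
  obtain ⟨ψ, hψ_unit, hψ_tight, hψ_inner⟩ :=
    IsTightFrame.exists_unitNorm_naimarkComplement htight hA hunit (d := n - m)
      (by rw [finrank_euclideanSpace_fin, Fintype.card_fin]; omega)
  rw [hbound] at hψ_tight
  rw [hscale] at hψ_inner
  exact ⟨ψ, hψ_unit, hψ_tight, hψ_inner,
    coherence_eq_mul_of_norm_inner_eq (div_nonneg hm'.le hnm.le) hψ_inner⟩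
end TightFrame
end
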